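/- arXiv:1403.3882 — 5 statements merged into one kernel-verified Lean document; each statement's English description precedes it below -/
import Mathlib

section
/- If f is C² on a compact convex set X ⊆ ℝⁿ, then for every ε > 0 there exist finitely many concave functions p₁,…,p_m : ℝⁿ → ℝ such that max_{x∈X} |f(x) − maxᵢ pᵢ(x)| ≤ ε. -/
/-!
A `C¹` function on a compact convex set is `K`-Lipschitz there for some `K`, so every downward
cone `x ↦ f z - K * dist x z` with apex `z ∈ X` lies below `f` on `X`, and touches it at `z`.
The maximum of the cones over a finite `δ`-net of `X` is therefore within `2 K δ` of `f` on `X`,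
and each cone is concave.
-/

open Set NNReal

theorem concaveOn_const_sub_mul_dist {E : Type*} [NormedAddCommGroup E] [NormedSpace ℝ E]
    (c : ℝ) {K : ℝ} (hK : 0 ≤ K) (y : E) :
    ConcaveOn ℝ univ (fun x => c - K * dist x y) := by
  have hcone : ConvexOn ℝ univ (fun x => K * dist x y) := by
    simpa [dist_eq_norm, sub_eq_neg_add] using (convexOn_univ_norm.translate_right (-y)).smul hK
  exact (concaveOn_const c convex_univ).sub hcone

section PseudoMetric

variable {α : Type*} [PseudoMetricSpace α]

theorem TotallyBounded.exists_fin_succ_net {s : Set α} (hs : TotallyBounded s)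
    (hne : s.Nonempty) {δ : ℝ} (hδ : 0 < δ) :
    ∃ (m : ℕ) (g : Fin (m + 1) → α), (∀ i, g i ∈ s) ∧ ∀ x ∈ s, ∃ i, dist x (g i) < δ := by
  obtain ⟨t, hts, htfin, hcov⟩ := Metric.finite_approx_of_totallyBounded hs δ hδ
  obtain ⟨n, g, rfl⟩ := htfin.fin_embedding
  have hnet : ∀ x ∈ s, ∃ i, dist x (g i) < δ := fun x hx => by
    obtain ⟨_, ⟨i, rfl⟩, hxi⟩ := mem_iUnion₂.1 (hcov hx)
    exact ⟨i, hxi⟩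
  obtain ⟨x₀, hx₀⟩ := hne
  obtain ⟨m, rfl⟩ : ∃ m, n = m + 1 :=
    Nat.exists_eq_succ_of_ne_zero (hnet x₀ hx₀).choose.pos.ne'
  exact ⟨m, g, fun i => hts (mem_range_self i), hnet⟩

theorem LipschitzOnWith.sub_mul_dist_le {X : Set α} {f : α → ℝ} {K : ℝ≥0}
    (hf : LipschitzOnWith K f X) {x z : α} (hx : x ∈ X) (hz : z ∈ X) :
    f z - K * dist x z ≤ f x := by
  have h := hf.dist_le_mul x hx z hz
  rw [Real.dist_eq, abs_le] at h
  linarith [h.1]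

theorem LipschitzOnWith.abs_sub_sup'_sub_mul_dist_le {ι : Type*} {s : Finset ι}
    (hs : s.Nonempty) {X : Set α} {f : α → ℝ} {K : ℝ≥0} (hf : LipschitzOnWith K f X)
    {g : ι → α} (hg : ∀ i ∈ s, g i ∈ X) {x : α} (hx : x ∈ X) {δ : ℝ} {j : ι} (hj : j ∈ s)
    (hxj : dist x (g j) ≤ δ) :
    |f x - s.sup' hs (fun i => f (g i) - K * dist x (g i))| ≤ 2 * K * δ := by
  have hsup_le : s.sup' hs (fun i => f (g i) - K * dist x (g i)) ≤ f x :=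
    Finset.sup'_le _ _ fun i hi => hf.sub_mul_dist_le hx (hg i hi)
  have hle_sup : f (g j) - K * dist x (g j) ≤ s.sup' hs (fun i => f (g i) - K * dist x (g i)) :=
    Finset.le_sup' (fun i => f (g i) - K * dist x (g i)) hj
  have hfj : f x - K * dist (g j) x ≤ f (g j) := hf.sub_mul_dist_le (hg j hj) hx
  have hKd : K * dist x (g j) ≤ K * δ := mul_le_mul_of_nonneg_left hxj K.2
  rw [dist_comm] at hfj
  rw [abs_le]
  constructor <;> nlinarith [K.2, dist_nonneg (x := x) (y := g j)]

end PseudoMetric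

theorem stmt_2_general (n : ℕ) (X U : Set (EuclideanSpace ℝ (Fin n)))
    (hXc : IsCompact X) (hXconv : Convex ℝ X)
    (f : EuclideanSpace ℝ (Fin n) → ℝ)
    (hXU : X ⊆ U) (hf : ContDiffOn ℝ 2 f U)
    (ε : ℝ) (hε : 0 < ε) :
    ∃ (m : ℕ) (p : Fin (m + 1) → EuclideanSpace ℝ (Fin n) → ℝ),
      (∀ i, ConcaveOn ℝ Set.univ (p i)) ∧
      ∀ x ∈ X, |f x - Finset.univ.sup' Finset.univ_nonempty (fun i => p i x)| ≤ ε := by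
  rcases X.eq_empty_or_nonempty with rfl | hXne
  · exact ⟨0, fun _ _ => 0, fun _ => concaveOn_const 0 convex_univ, by simp⟩
  obtain ⟨K, hK⟩ := (hf.mono hXU).exists_lipschitzOnWith two_ne_zero hXconv hXc
  set δ := ε / (2 * (K + 1))
  have hδ : 0 < δ := by positivity
  have hKδ : 2 * K * δ ≤ ε := by
    calc 2 * K * δ ≤ 2 * (K + 1) * δ := by gcongr; linarith
      _ = ε := mul_div_cancel₀ ε (by positivity)
  obtain ⟨m, g, hgX, hnet⟩ := hXc.totallyBounded.exists_fin_succ_net hXne hδ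
  refine ⟨m, fun i x => f (g i) - K * dist x (g i),
    fun i => concaveOn_const_sub_mul_dist _ K.2 _, fun x hx => ?_⟩
  obtain ⟨j, hj⟩ := hnet x hx
  exact (hK.abs_sub_sup'_sub_mul_dist_le Finset.univ_nonempty (fun i _ => hgX i) hx
    (Finset.mem_univ j) hj.le).trans hKδ

/-- Piecewise-concave approximation of C² functions: if `f` is C² on a neighborhood of a
compact convex set `X ⊆ ℝⁿ`, then for every `ε > 0` there are finitely many concave
functions whose pointwise maximum approximates `f` within `ε` on `X`. -/
theorem stmt_2 (n : ℕ) (X U : Set (EuclideanSpace ℝ (Fin n)))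
    (hXc : IsCompact X) (hXconv : Convex ℝ X)
    (f : EuclideanSpace ℝ (Fin n) → ℝ)
    (hU : IsOpen U) (hXU : X ⊆ U) (hf : ContDiffOn ℝ 2 f U)
    (ε : ℝ) (hε : 0 < ε) :
    ∃ (m : ℕ) (p : Fin (m + 1) → EuclideanSpace ℝ (Fin n) → ℝ),
      (∀ i, ConcaveOn ℝ Set.univ (p i)) ∧
      ∀ x ∈ X, |f x - Finset.univ.sup' Finset.univ_nonempty (fun i => p i x)| ≤ ε :=
  stmt_2_general n X U hXc hXconv f hXU hf ε hε
end

section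
/- Let f : ℝ → ℝ be Lipschitz with constant κ (strictly: |f(x)−f(y)| < κ|x−y| for x ≠ y) on [a,b], let [c, c+Δ] ⊆ [a,b], and let q be the quadratic with q(c + Δ/2) = f(c + Δ/2), q'(c) = 2κ, q'(c+Δ) = −2κ. Then q(x) < f(x) for all x ∈ [a,b] \ (c, c+Δ). -/
/-!
The conditions on `q` place its vertex at the midpoint `m = c + Δ/2`, so
`q x = f m - (2κ/Δ) (x - m)²`. Outside `(c, c + Δ)` we have `|x - m| ≥ Δ/2`, hence
`(2κ/Δ) (x - m)² ≥ κ |x - m| > f m - f x` by the strict Lipschitz bound.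
-/

theorem hasDerivAt_quadratic (α β₁ β₀ x : ℝ) :
    HasDerivAt (fun x => α * x ^ 2 + β₁ * x + β₀) (2 * α * x + β₁) x := by
  have h := (((hasDerivAt_pow 2 x).const_mul α).add ((hasDerivAt_id x).const_mul β₁)).add_const β₀
  exact h.congr_deriv (by simp; ring)

theorem quadratic_eq_vertex_form {α β₁ β₀ m : ℝ} (hm : 2 * α * m + β₁ = 0) (x : ℝ) :
    α * x ^ 2 + β₁ * x + β₀ = (α * m ^ 2 + β₁ * m + β₀) + α * (x - m) ^ 2 := by
  linear_combination (x - m) * hm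

theorem half_le_abs_sub_midpoint {c Δ x : ℝ} (hx : x ∉ Set.Ioo c (c + Δ)) :
    Δ / 2 ≤ |x - (c + Δ / 2)| := by
  rcases le_or_gt x c with h | h
  · linarith [neg_abs_le (x - (c + Δ / 2))]
  · have : c + Δ ≤ x := not_lt.mp fun h' => hx ⟨h, h'⟩
    linarith [le_abs_self (x - (c + Δ / 2))]

theorem mul_abs_le_div_mul_sq {κ Δ t : ℝ} (hκ : 0 ≤ κ) (hΔ : 0 < Δ) (ht : Δ / 2 ≤ |t|) :
    κ * |t| ≤ 2 * κ / Δ * t ^ 2 :=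
  calc κ * |t| = 2 * κ / Δ * (Δ / 2 * |t|) := by field_simp
    _ ≤ 2 * κ / Δ * (|t| * |t|) := by gcongr
    _ = 2 * κ / Δ * t ^ 2 := by rw [← sq, sq_abs]

theorem stmt_6_general (f : ℝ → ℝ) (a b κ c Δ : ℝ) (hκ : 0 < κ) (hΔ : 0 < Δ)
    (hab : Set.Icc c (c + Δ) ⊆ Set.Icc a b)
    (hlip : ∀ x ∈ Set.Icc a b, ∀ y ∈ Set.Icc a b, x ≠ y → |f x - f y| < κ * |x - y|)
    (q : ℝ → ℝ) (β₁ β₀ : ℝ)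
    (hq : ∀ x, q x = -(2 * κ / Δ) * x ^ 2 + β₁ * x + β₀)
    (hmid : q (c + Δ / 2) = f (c + Δ / 2))
    (hd1 : deriv q c = 2 * κ) :
    ∀ x ∈ Set.Icc a b, x ∉ Set.Ioo c (c + Δ) → q x < f x := by
  intro x hx hxo
  set m := c + Δ / 2 with hm_def
  have hvertex : 2 * -(2 * κ / Δ) * m + β₁ = 0 := by
    have hderiv := (hasDerivAt_quadratic (-(2 * κ / Δ)) β₁ β₀ c).deriv
    rw [← funext hq, hd1] at hderiv
    rw [hm_def]
    field_simp at hderiv ⊢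
    linarith
  have hqx : q x = q m - 2 * κ / Δ * (x - m) ^ 2 := by
    rw [hq, hq, quadratic_eq_vertex_form hvertex x]; ring
  have hm : m ∈ Set.Icc a b := hab ⟨by linarith, by linarith⟩
  have hdist : Δ / 2 ≤ |x - m| := half_le_abs_sub_midpoint hxo
  have hne : x ≠ m := fun h => by simp [h] at hdist; linarith
  have hfx := hlip x hx m hm hne
  rw [hqx, hmid]
  linarith [mul_abs_le_div_mul_sq hκ.le hΔ hdist, neg_abs_le (f x - f m)]

/-- If `f` is strictly `κ`-Lipschitz on `[a,b]`, `[c, c+Δ] ⊆ [a,b]`, and `q` is the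
quadratic with `q(c + Δ/2) = f(c + Δ/2)`, `q'(c) = 2κ`, `q'(c+Δ) = -2κ`, then
`q(x) < f(x)` for all `x ∈ [a,b] \ (c, c+Δ)`. -/
theorem stmt_6 (f : ℝ → ℝ) (a b κ c Δ : ℝ) (hκ : 0 < κ) (hΔ : 0 < Δ)
    (hab : Set.Icc c (c + Δ) ⊆ Set.Icc a b)
    (hlip : ∀ x ∈ Set.Icc a b, ∀ y ∈ Set.Icc a b, x ≠ y → |f x - f y| < κ * |x - y|)
    (q : ℝ → ℝ) (β₁ β₀ : ℝ)
    (hq : ∀ x, q x = -(2 * κ / Δ) * x ^ 2 + β₁ * x + β₀)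
    (hmid : q (c + Δ / 2) = f (c + Δ / 2))
    (hd1 : deriv q c = 2 * κ) (hd2 : deriv q (c + Δ) = -(2 * κ)) :
    ∀ x ∈ Set.Icc a b, x ∉ Set.Ioo c (c + Δ) → q x < f x :=
  stmt_6_general f a b κ c Δ hκ hΔ hab hlip q β₁ β₀ hq hmid hd1
end

section
/- Let f be strictly κ-Lipschitz on [a,b] and let q₁, q₂ be the concave quadratics constructed on adjacent subintervals [c−Δ, c] and [c, c+Δ] as in the midpoint-interpolation scheme. Then q₁(x) > q₂(x) for all x ∈ [a, c − Δ/2], and q₂(x) > q₁(x) for all x ∈ [c + Δ/2, b]. -/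
/-!
The difference `q₁ - q₂` of two quadratics with the same leading coefficient is affine, and its
slope `q₁'(c) - q₂'(c) = -4κ` is read off at the common endpoint `c`. For a quadratic the
symmetric difference quotient is exact, `q(c + h) - q(c - h) = 2h q'(c)`, which transports the
interpolation conditions across `c`: `q₂(c - Δ/2) = f(c + Δ/2) - 2κΔ` and
`q₁(c + Δ/2) = f(c - Δ/2) - 2κΔ`. Since `|f(c + Δ/2) - f(c - Δ/2)| < κΔ`, the two quadratics are
already ordered at `c ∓ Δ/2`, and the slope keeps them ordered further out.
-/

section Quadratic

variable {q p r : ℝ → ℝ} {A B D B' D' : ℝ}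

lemma deriv_eq_of_quadratic (hq : ∀ x, q x = A * x ^ 2 + B * x + D) (t : ℝ) :
    deriv q t = 2 * A * t + B := by
  rw [funext hq]
  refine HasDerivAt.deriv ?_
  convert (((hasDerivAt_pow 2 t).const_mul A).add ((hasDerivAt_id t).const_mul B)).add_const D
    using 1
  norm_num
  ring

lemma sub_eq_two_mul_deriv_of_quadratic (hq : ∀ x, q x = A * x ^ 2 + B * x + D) (c h : ℝ) :
    q (c + h) - q (c - h) = 2 * h * deriv q c := by
  rw [deriv_eq_of_quadratic hq, hq, hq]
  ring

lemma sub_eq_of_quadratic (hp : ∀ x, p x = A * x ^ 2 + B * x + D)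
    (hr : ∀ x, r x = A * x ^ 2 + B' * x + D') (x y c : ℝ) :
    p x - r x = p y - r y + (deriv p c - deriv r c) * (x - y) := by
  rw [deriv_eq_of_quadratic hp, deriv_eq_of_quadratic hr, hp, hp, hr, hr]
  ring

end Quadratic

theorem stmt_9_general (f : ℝ → ℝ) (a b κ Δ c : ℝ) (hΔ : 0 < Δ)
    (hsub : Set.Icc (c - Δ) (c + Δ) ⊆ Set.Icc a b)
    (hlip : ∀ x ∈ Set.Icc a b, ∀ y ∈ Set.Icc a b, x ≠ y → |f x - f y| < κ * |x - y|)
    (q₁ q₂ : ℝ → ℝ) (b₁ d₁ b₂ d₂ : ℝ)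
    (hq₁ : ∀ x, q₁ x = -(2 * κ / Δ) * x ^ 2 + b₁ * x + d₁)
    (hq₂ : ∀ x, q₂ x = -(2 * κ / Δ) * x ^ 2 + b₂ * x + d₂)
    (hmid₁ : q₁ (c - Δ / 2) = f (c - Δ / 2))
    (hd₁r : deriv q₁ c = -(2 * κ))
    (hmid₂ : q₂ (c + Δ / 2) = f (c + Δ / 2))
    (hd₂l : deriv q₂ c = 2 * κ) :
    (∀ x ∈ Set.Icc a (c - Δ / 2), q₂ x < q₁ x) ∧
    (∀ x ∈ Set.Icc (c + Δ / 2) b, q₁ x < q₂ x) := by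
  have hgap : |f (c + Δ / 2) - f (c - Δ / 2)| < κ * Δ := by
    convert hlip _ (hsub ⟨by linarith, by linarith⟩) _ (hsub ⟨by linarith, by linarith⟩)
      (by linarith : c + Δ / 2 ≠ c - Δ / 2) using 2
    rw [add_sub_sub_cancel, add_halves, abs_of_pos hΔ]
  have hκ : 0 < κ := pos_of_mul_pos_left ((abs_nonneg _).trans_lt hgap) hΔ.le
  have hq₁_across := sub_eq_two_mul_deriv_of_quadratic hq₁ c (Δ / 2)
  have hq₂_across := sub_eq_two_mul_deriv_of_quadratic hq₂ c (Δ / 2)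
  rw [abs_lt] at hgap
  constructor
  · rintro x ⟨-, hx⟩
    have haffine := sub_eq_of_quadratic hq₁ hq₂ x (c - Δ / 2) c
    nlinarith
  · rintro x ⟨hx, -⟩
    have haffine := sub_eq_of_quadratic hq₁ hq₂ x (c + Δ / 2) c
    nlinarith

/-- For `f` strictly `κ`-Lipschitz on `[a,b]` and `q₁, q₂` the concave quadratics built on
adjacent subintervals `[c-Δ, c]` and `[c, c+Δ]`, we have `q₁ > q₂` on `[a, c - Δ/2]`
and `q₂ > q₁` on `[c + Δ/2, b]`. -/
theorem stmt_9 (f : ℝ → ℝ) (a b κ Δ c : ℝ) (hκ : 0 < κ) (hΔ : 0 < Δ)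
    (hsub : Set.Icc (c - Δ) (c + Δ) ⊆ Set.Icc a b)
    (hlip : ∀ x ∈ Set.Icc a b, ∀ y ∈ Set.Icc a b, x ≠ y → |f x - f y| < κ * |x - y|)
    (q₁ q₂ : ℝ → ℝ) (b₁ d₁ b₂ d₂ : ℝ)
    (hq₁ : ∀ x, q₁ x = -(2 * κ / Δ) * x ^ 2 + b₁ * x + d₁)
    (hq₂ : ∀ x, q₂ x = -(2 * κ / Δ) * x ^ 2 + b₂ * x + d₂)
    (hmid₁ : q₁ (c - Δ / 2) = f (c - Δ / 2))
    (hd₁l : deriv q₁ (c - Δ) = 2 * κ) (hd₁r : deriv q₁ c = -(2 * κ))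
    (hmid₂ : q₂ (c + Δ / 2) = f (c + Δ / 2))
    (hd₂l : deriv q₂ c = 2 * κ) (hd₂r : deriv q₂ (c + Δ) = -(2 * κ)) :
    (∀ x ∈ Set.Icc a (c - Δ / 2), q₂ x < q₁ x) ∧
    (∀ x ∈ Set.Icc (c + Δ / 2) b, q₁ x < q₂ x) :=
  stmt_9_general f a b κ Δ c hΔ hsub hlip q₁ q₂ b₁ d₁ b₂ d₂ hq₁ hq₂ hmid₁ hd₁r hmid₂ hd₂l
end

section
/- If f : ℝ → ℝ is Lipschitz continuous on a compact interval [a,b], then for every ε > 0 there exist finitely many concave quadratic functions q₁,…,q_m such that max_{x∈[a,b]} |f(x) − maxᵢ qᵢ(x)| ≤ ε. -/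
/-!
Put `M = κ² / ε`, `δ = ε / (2κ)`, and take the downward parabolas `f p - M (x - p)²` centred
at the points `p` of a finite `δ`-net of `[a, b]`. Each of them lies below `f + ε`, since the
Lipschitz bound gives `f p - M (x - p)² - f x ≤ κ u - M u² ≤ κ² / (4M)` with `u = |x - p|`;
and the one centred at a net point within `δ` of `x` is at least `f x - (κ δ + M δ²) = f x - 3ε/4`
there.
-/

open Set Finset

theorem Metric.exists_fin_net_of_isCompact {X : Type*} [PseudoMetricSpace X] {s : Set X}
    (hs : IsCompact s) (hne : s.Nonempty) {δ : ℝ} (hδ : 0 < δ) :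
    ∃ (m : ℕ) (p : Fin (m + 1) → X), (∀ i, p i ∈ s) ∧ ∀ x ∈ s, ∃ i, dist x (p i) < δ := by
  obtain ⟨t, hts, htfin, hcover⟩ := finite_approx_of_totallyBounded hs.totallyBounded δ hδ
  obtain ⟨n, e, rfl⟩ := htfin.fin_embedding
  have hnet : ∀ x ∈ s, ∃ i, dist x (e i) < δ := fun x hx => by
    obtain ⟨_, ⟨i, rfl⟩, hxi⟩ := mem_iUnion₂.mp (hcover hx)
    exact ⟨i, hxi⟩
  rcases n with _ | m
  · obtain ⟨x, hx⟩ := hne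
    exact (hnet x hx).elim fun i _ => i.elim0
  · exact ⟨m, e, fun i => hts (mem_range_self i), hnet⟩

theorem mul_sub_mul_sq_le_div (κ M u : ℝ) (hM : 0 < M) : κ * u - M * u ^ 2 ≤ κ ^ 2 / (4 * M) := by
  rw [le_div_iff₀ (by positivity)]
  nlinarith [sq_nonneg (2 * M * u - κ)]

section LipschitzOn

variable {s : Set ℝ} {f : ℝ → ℝ} {κ M x p : ℝ}

theorem sub_mul_sq_le_add_of_lipschitzOn
    (hlip : ∀ x ∈ s, ∀ y ∈ s, |f x - f y| ≤ κ * |x - y|) (hx : x ∈ s) (hp : p ∈ s) (hM : 0 < M) :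
    f p - M * (x - p) ^ 2 ≤ f x + κ ^ 2 / (4 * M) := by
  have hfp : f p - f x ≤ κ * |p - x| := (abs_le.mp (hlip p hp x hx)).2
  have hquad := mul_sub_mul_sq_le_div κ M |p - x| hM
  rw [sq_abs] at hquad
  linarith [show (x - p) ^ 2 = (p - x) ^ 2 by ring]

theorem sub_le_sub_mul_sq_of_lipschitzOn {δ : ℝ}
    (hlip : ∀ x ∈ s, ∀ y ∈ s, |f x - f y| ≤ κ * |x - y|) (hx : x ∈ s) (hp : p ∈ s)
    (hκ : 0 ≤ κ) (hM : 0 ≤ M) (hxp : |x - p| ≤ δ) :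
    f x - (κ * δ + M * δ ^ 2) ≤ f p - M * (x - p) ^ 2 := by
  have hfx : f x - f p ≤ κ * |x - p| := (abs_le.mp (hlip x hx p hp)).2
  have hlin : κ * |x - p| ≤ κ * δ := mul_le_mul_of_nonneg_left hxp hκ
  have hsq : M * (x - p) ^ 2 ≤ M * δ ^ 2 := by
    rw [← sq_abs]
    exact mul_le_mul_of_nonneg_left (pow_le_pow_left₀ (abs_nonneg _) hxp 2) hM
  linarith

end LipschitzOn

/-- A function Lipschitz on a compact interval `[a,b]` can be approximated within any
`ε > 0` by a finite pointwise maximum of concave quadratic functions. -/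
theorem stmt_14 (f : ℝ → ℝ) (a b κ : ℝ) (hab : a < b) (hκ : 0 < κ)
    (hlip : ∀ x ∈ Set.Icc a b, ∀ y ∈ Set.Icc a b, |f x - f y| ≤ κ * |x - y|)
    (ε : ℝ) (hε : 0 < ε) :
    ∃ (m : ℕ) (q : Fin (m + 1) → ℝ → ℝ),
      (∀ i, ∃ A B C : ℝ, A ≤ 0 ∧ ∀ x, q i x = A * x ^ 2 + B * x + C) ∧
      ∀ x ∈ Set.Icc a b,
        |f x - Finset.univ.sup' Finset.univ_nonempty (fun i => q i x)| ≤ ε := by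
  set M := κ ^ 2 / ε
  set δ := ε / (2 * κ)
  have hM : 0 < M := by positivity
  have hup : κ ^ 2 / (4 * M) ≤ ε := by
    rw [show κ ^ 2 / (4 * M) = ε / 4 by simp only [M]; field_simp]; linarith
  have hlow : κ * δ + M * δ ^ 2 ≤ ε := by
    rw [show κ * δ + M * δ ^ 2 = 3 * ε / 4 by simp only [M, δ]; field_simp; ring]; linarith
  obtain ⟨m, p, hp, hnet⟩ :=
    Metric.exists_fin_net_of_isCompact isCompact_Icc (nonempty_Icc.2 hab.le)
      (by positivity : 0 < δ)
  refine ⟨m, fun i x => f (p i) - M * (x - p i) ^ 2,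
    fun i => ⟨-M, 2 * M * p i, f (p i) - M * p i ^ 2, by linarith, fun x => by ring⟩,
    fun x hx => abs_sub_le_iff.2 ⟨?_, ?_⟩⟩
  · obtain ⟨i, hi⟩ := hnet x hx
    rw [Real.dist_eq] at hi
    have hnear := sub_le_sub_mul_sq_of_lipschitzOn hlip hx (hp i) hκ.le hM.le hi.le
    linarith [Finset.le_sup' (fun j => f (p j) - M * (x - p j) ^ 2) (Finset.mem_univ i)]
  · have hsup : univ.sup' univ_nonempty (fun j => f (p j) - M * (x - p j) ^ 2) ≤ f x + ε :=
      Finset.sup'_le _ _ fun j _ => by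
        linarith [sub_mul_sq_le_add_of_lipschitzOn hlip hx (hp j) hM]
    linarith
end

section
/- Let f : ℝⁿ → ℝ be separable, f(x) = Σⱼ fⱼ(xⱼ), with each fⱼ Lipschitz on [aⱼ, bⱼ]. Then for every ε > 0 there exist finitely many concave functions p₁,…,p_m : ℝⁿ → ℝ such that |f(x) − maxᵢ pᵢ(x)| ≤ ε for all x in the box Πⱼ [aⱼ, bⱼ]. -/
/-!
Each `fⱼ` is `κⱼ`-Lipschitz, so for every point `y` of the box the cone
`x ↦ f(y) - Σⱼ κⱼ |xⱼ - yⱼ|` is concave, lies below `f` on the box, and is within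
`2 Σⱼ κⱼ |xⱼ - yⱼ|` of `f` there. By compactness finitely many apexes `y` form a fine enough
net of the box, and the maximum of the corresponding cones is the required approximation.
-/

open Set Finset

theorem IsCompact.exists_fin_succ_cover_balls {X : Type*} [PseudoMetricSpace X] {K : Set X}
    (hK : IsCompact K) (hne : K.Nonempty) {δ : ℝ} (hδ : 0 < δ) :
    ∃ (m : ℕ) (c : Fin (m + 1) → X), (∀ i, c i ∈ K) ∧ ∀ x ∈ K, ∃ i, dist x (c i) < δ := by
  obtain ⟨t, htK, htfin, hcover⟩ := finite_cover_balls_of_compact hK hδ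
  obtain ⟨_ | m, c, -, rfl⟩ := htfin.fin_param
  · obtain ⟨x, hx⟩ := hne
    simpa using hcover hx
  refine ⟨m, c, fun i => htK (mem_range_self i), fun x hx => ?_⟩
  simpa using hcover hx

theorem abs_sub_sup'_le {ι : Type*} {s : Finset ι} (hs : s.Nonempty) {p : ι → ℝ} {a ε : ℝ}
    (hle : ∀ i ∈ s, p i ≤ a) (hge : ∃ i ∈ s, a - ε ≤ p i) : |a - s.sup' hs p| ≤ ε := by
  obtain ⟨i, hi, hpi⟩ := hge
  have := s.le_sup' p hi
  rw [abs_le]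
  constructor <;> linarith [s.sup'_le hs p hle]

theorem exists_fin_sup'_approx_of_cones {X : Type*} [PseudoMetricSpace X] {K : Set X}
    (hK : IsCompact K) (hne : K.Nonempty) {F : X → ℝ} {g : X → X → ℝ} {L : ℝ} (hL : 0 ≤ L)
    (hle : ∀ y ∈ K, ∀ x ∈ K, g y x ≤ F x)
    (hnear : ∀ y ∈ K, ∀ x ∈ K, F x - g y x ≤ L * dist x y) {ε : ℝ} (hε : 0 < ε) :
    ∃ (m : ℕ) (c : Fin (m + 1) → X), ∀ x ∈ K,
      |F x - univ.sup' univ_nonempty (fun i => g (c i) x)| ≤ ε := by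
  obtain ⟨m, c, hcK, hc⟩ :=
    hK.exists_fin_succ_cover_balls hne (div_pos hε (by linarith : 0 < L + 1))
  refine ⟨m, c, fun x hx => abs_sub_sup'_le _ (fun i _ => hle _ (hcK i) x hx) ?_⟩
  obtain ⟨i, hi⟩ := hc x hx
  refine ⟨i, mem_univ i, ?_⟩
  have hdist : (L + 1) * dist x (c i) < ε := by
    rwa [lt_div_iff₀' (by linarith)] at hi
  nlinarith [hnear _ (hcK i) x hx, dist_nonneg (x := x) (y := c i)]

section WeightedL1

variable {ι : Type*} [Fintype ι]

def weightedL1Dist (κ : ι → ℝ) (x y : ι → ℝ) : ℝ := ∑ j, κ j * |x j - y j|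

theorem weightedL1Dist_comm (κ x y : ι → ℝ) : weightedL1Dist κ x y = weightedL1Dist κ y x := by
  simp only [weightedL1Dist, abs_sub_comm]

theorem convexOn_weightedL1Dist {κ : ι → ℝ} (hκ : ∀ j, 0 ≤ κ j) (y : ι → ℝ) :
    ConvexOn ℝ univ (fun x => weightedL1Dist κ x y) := by
  have hterm : ∀ j, ConvexOn ℝ univ (fun x : ι → ℝ => κ j * |x j - y j|) := fun j =>
    ((convexOn_univ_dist (y j)).comp_affineMap
      (LinearMap.proj (R := ℝ) (φ := fun _ : ι => ℝ) j).toAffineMap).smul (hκ j)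
  simpa [weightedL1Dist, Finset.sum_fn] using
    Finset.sum_induction (fun j (x : ι → ℝ) => κ j * |x j - y j|) (ConvexOn ℝ univ)
      (fun _ _ => ConvexOn.add) (convexOn_const 0 convex_univ) (fun j _ => hterm j)

theorem weightedL1Dist_le_mul_dist {κ : ι → ℝ} (hκ : ∀ j, 0 ≤ κ j) (x y : ι → ℝ) :
    weightedL1Dist κ x y ≤ (∑ j, κ j) * dist x y := by
  rw [weightedL1Dist, Finset.sum_mul]
  gcongr with j
  · exact hκ j
  · exact (Real.dist_eq _ _).symm.trans_le (dist_le_pi_dist x y j)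

theorem sum_sub_sum_le_weightedL1Dist {f : ι → ℝ → ℝ} {κ : ι → ℝ} {s : ι → Set ℝ}
    (hlip : ∀ j, ∀ x ∈ s j, ∀ y ∈ s j, |f j x - f j y| ≤ κ j * |x - y|)
    {x y : ι → ℝ} (hx : x ∈ univ.pi s) (hy : y ∈ univ.pi s) :
    ∑ j, f j (x j) - ∑ j, f j (y j) ≤ weightedL1Dist κ x y := by
  rw [← Finset.sum_sub_distrib, weightedL1Dist]
  gcongr with j
  exact (le_abs_self _).trans (hlip j _ (hx j trivial) _ (hy j trivial))

end WeightedL1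

theorem stmt_17_general (n : ℕ) (f : Fin n → ℝ → ℝ) (A B κ : Fin n → ℝ)
    (hκ : ∀ j, 0 < κ j)
    (hlip : ∀ j, ∀ x ∈ Set.Icc (A j) (B j), ∀ y ∈ Set.Icc (A j) (B j),
      |f j x - f j y| ≤ κ j * |x - y|)
    (ε : ℝ) (hε : 0 < ε) :
    ∃ (m : ℕ) (p : Fin (m + 1) → (Fin n → ℝ) → ℝ),
      (∀ i, ConcaveOn ℝ Set.univ (p i)) ∧
      ∀ x : Fin n → ℝ, (∀ j, x j ∈ Set.Icc (A j) (B j)) →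
        |(∑ j, f j (x j)) - Finset.univ.sup' Finset.univ_nonempty (fun i => p i x)| ≤ ε := by
  set K := Set.univ.pi fun j => Set.Icc (A j) (B j)
  rcases K.eq_empty_or_nonempty with hempty | hne
  · refine ⟨0, fun _ _ => 0, fun _ => concaveOn_const 0 convex_univ, fun x hx => ?_⟩
    exact absurd (hempty ▸ mem_univ_pi.2 hx) (Set.notMem_empty x)
  have hκ₀ : ∀ j, 0 ≤ κ j := fun j => (hκ j).le
  obtain ⟨m, c, hc⟩ := exists_fin_sup'_approx_of_cones (isCompact_univ_pi fun j => isCompact_Icc)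
    hne (F := fun x => ∑ j, f j (x j)) (g := fun y x => ∑ j, f j (y j) - weightedL1Dist κ x y)
    (L := 2 * ∑ j, κ j) (mul_nonneg zero_le_two (sum_nonneg fun j _ => hκ₀ j))
    (fun y hy x hx => by
      linarith [sum_sub_sum_le_weightedL1Dist hlip hy hx, weightedL1Dist_comm κ x y])
    (fun y hy x hx => by
      linarith [sum_sub_sum_le_weightedL1Dist hlip hx hy, weightedL1Dist_le_mul_dist hκ₀ x y])
    hε
  exact ⟨m, fun i x => ∑ j, f j (c i j) - weightedL1Dist κ x (c i),
    fun i => (concaveOn_const _ convex_univ).sub (convexOn_weightedL1Dist hκ₀ (c i)),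
    fun x hx => hc x (mem_univ_pi.2 hx)⟩

/-- Piecewise-concave approximation of separable Lipschitz functions: if
`f x = Σⱼ fⱼ(xⱼ)` with each `fⱼ` Lipschitz on `[aⱼ, bⱼ]`, then for every `ε > 0` there are
finitely many concave functions whose pointwise maximum approximates `f` within `ε` on the box. -/
theorem stmt_17 (n : ℕ) (hn : 1 ≤ n) (f : Fin n → ℝ → ℝ) (A B κ : Fin n → ℝ)
    (hκ : ∀ j, 0 < κ j)
    (hlip : ∀ j, ∀ x ∈ Set.Icc (A j) (B j), ∀ y ∈ Set.Icc (A j) (B j),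
      |f j x - f j y| ≤ κ j * |x - y|)
    (ε : ℝ) (hε : 0 < ε) :
    ∃ (m : ℕ) (p : Fin (m + 1) → (Fin n → ℝ) → ℝ),
      (∀ i, ConcaveOn ℝ Set.univ (p i)) ∧
      ∀ x : Fin n → ℝ, (∀ j, x j ∈ Set.Icc (A j) (B j)) →
        |(∑ j, f j (x j)) - Finset.univ.sup' Finset.univ_nonempty (fun i => p i x)| ≤ ε :=
  stmt_17_general n f A B κ hκ hlip ε hε
end
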